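/- arXiv:1307.1827 — 6 statements merged into one kernel-verified Lean document; each statement's English description precedes it below -/
import Mathlib

section
/- Let (X,ρ) be a metric space, W = {w_1,…,w_k} ⊆ X a finite multiset of size k, and w_opt ∈ X. For each i ∈ [k], let r_i := min{ r ≥ 0 : |B_ρ(w_i,r) ∩ W| > k/2 }, and let i_opt ∈ argmin_{i∈[k]} r_i. Then ρ(w_opt, w_{i_opt}) ≤ 3·Δ_W(w_opt, 0). In particular, if more than half of the points of W lie within distance ε of w_opt, then ρ(w_opt, w_{i_opt}) ≤ 3ε. -/
/-!
If more than half of the points lie within `ε` of `x`, then any `w i` among them has more than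
half of the points within `2ε`, so the smallest "majority radius" `r_{i_opt}` is at most `2ε`.
Two majorities must share a point, so the majority ball of radius just above `r_{i_opt}` around
`w i_opt` meets the one of radius `ε` around `x`, and `ρ(x, w i_opt) ≤ ε + 2ε`.
-/

open scoped Classical

/-- `Delta w x α` is Δ_W(x, α): the minimal `r ≥ 0` such that the number of points of the
multiset `W = {w 1, …, w k}` within distance `r` of `x` exceeds `k (1/2 + α)`. -/
noncomputable def Delta {X : Type*} [MetricSpace X] {k : ℕ} (w : Fin k → X) (x : X)
    (α : ℝ) : ℝ :=
  sInf {r : ℝ | 0 ≤ r ∧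
    (k : ℝ) * (1 / 2 + α) < ((Finset.univ.filter fun i => dist x (w i) ≤ r).card : ℝ)}

open Finset

section MajorityRadius

variable {ι X : Type*} [Fintype ι] [PseudoMetricSpace X] {w : ι → X} {x y : X} {s t : ℝ}

noncomputable def nearIndices (w : ι → X) (x : X) (t : ℝ) : Finset ι :=
  univ.filter fun i => dist x (w i) ≤ t

def IsMajorityRadius (w : ι → X) (x : X) (t : ℝ) : Prop :=
  0 ≤ t ∧ (Fintype.card ι : ℝ) < 2 * #(nearIndices w x t)

/-- The paper's `r_i` is `majorityRadius w (w i)`, and `Δ_W(x, 0)` is `majorityRadius w x`. -/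
noncomputable def majorityRadius (w : ι → X) (x : X) : ℝ :=
  sInf {t | IsMajorityRadius w x t}

lemma IsMajorityRadius.of_dist_le (h : IsMajorityRadius w x s) (hxy : dist x y ≤ t) :
    IsMajorityRadius w y (s + t) := by
  refine ⟨add_nonneg h.1 (dist_nonneg.trans hxy), h.2.trans_le ?_⟩
  have hsub : nearIndices w x s ⊆ nearIndices w y (s + t) :=
    monotone_filter_right _ fun i _ hi =>
      (dist_triangle_left y (w i) x).trans (by linarith)
  gcongr

lemma IsMajorityRadius.mono (h : IsMajorityRadius w x s) (hst : s ≤ t) :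
    IsMajorityRadius w x t := by
  simpa using h.of_dist_le (y := x) (t := t - s) (by simpa using hst)

lemma exists_isMajorityRadius [Nonempty ι] (w : ι → X) (x : X) : ∃ t, IsMajorityRadius w x t := by
  refine ⟨∑ i, dist x (w i), by positivity, ?_⟩
  have hall : nearIndices w x (∑ i, dist x (w i)) = univ :=
    filter_true_of_mem fun i _ =>
      single_le_sum (f := fun i => dist x (w i)) (fun _ _ => dist_nonneg) (mem_univ i)
  rw [hall, card_univ]
  have : (0 : ℝ) < Fintype.card ι := by exact_mod_cast Fintype.card_pos
  linarith

lemma majorityRadius_le (h : IsMajorityRadius w x t) : majorityRadius w x ≤ t :=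
  csInf_le ⟨0, fun _ hs => hs.1⟩ h

lemma isMajorityRadius_of_majorityRadius_lt [Nonempty ι] (h : majorityRadius w x < t) :
    IsMajorityRadius w x t := by
  obtain ⟨s, hs, hst⟩ := exists_lt_of_csInf_lt (exists_isMajorityRadius w x) h
  exact IsMajorityRadius.mono hs hst.le

/-- Two balls each containing more than half of the points share one of them. -/
lemma IsMajorityRadius.dist_le_add (hx : IsMajorityRadius w x s) (hy : IsMajorityRadius w y t) :
    dist x y ≤ s + t := by
  have hcard : #(univ : Finset ι) < #(nearIndices w x s) + #(nearIndices w y t) := by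
    have := hx.2; have := hy.2
    rw [card_univ]
    exact_mod_cast (by linarith :
      (Fintype.card ι : ℝ) < #(nearIndices w x s) + #(nearIndices w y t))
  obtain ⟨i, hi⟩ := inter_nonempty_of_card_lt_card_add_card (subset_univ _) (subset_univ _) hcard
  simp only [nearIndices, mem_inter, mem_filter, mem_univ, true_and] at hi
  exact (dist_triangle_right x y (w i)).trans (add_le_add hi.1 hi.2)

lemma dist_le_three_mul_of_isMajorityRadius {j : ι} {ε : ℝ}
    (hmin : ∀ i, majorityRadius w (w j) ≤ majorityRadius w (w i))
    (hε : IsMajorityRadius w x ε) : dist x (w j) ≤ 3 * ε := by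
  have : Nonempty ι := ⟨j⟩
  obtain ⟨i, hi⟩ : (nearIndices w x ε).Nonempty := by
    rw [← card_pos]
    exact_mod_cast (by linarith [hε.2, (Fintype.card ι).cast_nonneg (α := ℝ)] :
      (0 : ℝ) < #(nearIndices w x ε))
  have hri : majorityRadius w (w i) ≤ 2 * ε :=
    majorityRadius_le ((two_mul ε).symm ▸ hε.of_dist_le (mem_filter.mp hi).2)
  have hrj : dist x (w j) - ε ≤ majorityRadius w (w j) :=
    le_of_forall_gt_imp_ge_of_dense fun t ht => by
      linarith [hε.dist_le_add (isMajorityRadius_of_majorityRadius_lt ht)]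
  linarith [hmin i]

lemma dist_le_three_mul_majorityRadius {j : ι}
    (hmin : ∀ i, majorityRadius w (w j) ≤ majorityRadius w (w i)) :
    dist x (w j) ≤ 3 * majorityRadius w x := by
  have : Nonempty ι := ⟨j⟩
  have h : dist x (w j) / 3 ≤ majorityRadius w x :=
    le_of_forall_gt_imp_ge_of_dense fun ε hε => by
      linarith [dist_le_three_mul_of_isMajorityRadius hmin
        (isMajorityRadius_of_majorityRadius_lt hε)]
  linarith

end MajorityRadius

lemma Delta_zero_eq_majorityRadius {X : Type*} [MetricSpace X] {k : ℕ} (w : Fin k → X)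
    (x : X) : Delta w x 0 = majorityRadius w x := by
  simp only [Delta, majorityRadius, IsMajorityRadius, nearIndices, Fintype.card_fin]
  congr! 4 with t
  constructor <;> intro h <;> linarith

theorem stmt1_general {X : Type*} [MetricSpace X] {k : ℕ}
    (w : Fin k → X) (wopt : X)
    (r : Fin k → ℝ)
    (hr : ∀ i, r i = sInf {t : ℝ | 0 ≤ t ∧
      (k : ℝ) < 2 * ((Finset.univ.filter fun j => dist (w i) (w j) ≤ t).card : ℝ)})
    (iopt : Fin k) (hiopt : ∀ i, r iopt ≤ r i) :
    dist wopt (w iopt) ≤ 3 * Delta w wopt 0 ∧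
      ∀ ε : ℝ, 0 ≤ ε →
        (k : ℝ) < 2 * ((Finset.univ.filter fun i => dist wopt (w i) ≤ ε).card : ℝ) →
        dist wopt (w iopt) ≤ 3 * ε := by
  have hr' : ∀ i, r i = majorityRadius w (w i) := fun i => by
    simp only [hr, majorityRadius, IsMajorityRadius, nearIndices, Fintype.card_fin]
  have hmin : ∀ i, majorityRadius w (w iopt) ≤ majorityRadius w (w i) := by
    simpa only [hr'] using hiopt
  refine ⟨Delta_zero_eq_majorityRadius w wopt ▸ dist_le_three_mul_majorityRadius hmin, ?_⟩
  intro ε hε hmaj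
  exact dist_le_three_mul_of_isMajorityRadius hmin
    ⟨hε, by simpa only [nearIndices, Fintype.card_fin] using hmaj⟩

theorem stmt1 {X : Type*} [MetricSpace X] {k : ℕ} (hk : 0 < k)
    (w : Fin k → X) (wopt : X)
    (r : Fin k → ℝ)
    (hr : ∀ i, r i = sInf {t : ℝ | 0 ≤ t ∧
      (k : ℝ) < 2 * ((Finset.univ.filter fun j => dist (w i) (w j) ≤ t).card : ℝ)})
    (iopt : Fin k) (hiopt : ∀ i, r iopt ≤ r i) :
    dist wopt (w iopt) ≤ 3 * Delta w wopt 0 ∧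
      ∀ ε : ℝ, 0 ≤ ε →
        (k : ℝ) < 2 * ((Finset.univ.filter fun i => dist wopt (w i) ≤ ε).card : ℝ) →
        dist wopt (w iopt) ≤ 3 * ε :=
  stmt1_general w wopt r hr iopt hiopt
end

section
/- Let (X,ρ) be a metric space, w_opt ∈ X, and ε > 0. Let w_1,…,w_k be independent X-valued random variables, each satisfying P[ρ(w_opt,w_i) ≤ ε] ≥ 2/3. Set W := {w_1,…,w_k}, for each i let r_i := min{ r ≥ 0 : |B_ρ(w_i,r) ∩ W| > k/2 }, and let ŵ := w_{i_opt} where i_opt ∈ argmin_i r_i. Then with probability at least 1 − e^{−k/18}, ρ(w_opt, ŵ) ≤ 3ε. -/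
open MeasureTheory ProbabilityTheory
open scoped Classical

/-!
The indicators of the events `ρ(wopt, wᵢ) ≤ ε` are independent with means at least `2/3`, so by
Hoeffding's inequality more than `k/2` of the `wᵢ` lie within `ε` of `wopt`, except on an event
of probability at most `exp (-2k (2/3 - 1/2)²) = exp (-k/18)`.
On the good event the argument is deterministic. Two closed balls each containing more than
half of `W` share a point, so their centres are at most the sum of the radii apart. A point
`wᵢ` within `ε` of `wopt` has `rᵢ ≤ 2ε`, hence `r_{iopt} ≤ 2ε`, and the majority balls around
`wopt` (radius `ε`) and around `ŵ` (radius about `r_{iopt}`) give `ρ(wopt, ŵ) ≤ 3ε`.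
-/

open Finset Real
open scoped NNReal

section Probability

variable {Ω : Type*} [MeasurableSpace Ω] {μ : Measure Ω} [IsProbabilityMeasure μ]

theorem measureReal_sum_add_le_sum_integral_le {ι : Type*} [Fintype ι] {Y : ι → Ω → ℝ}
    (hindep : iIndepFun Y μ) (hmeas : ∀ i, AEMeasurable (Y i) μ)
    (hY : ∀ i, ∀ᵐ ω ∂μ, Y i ω ∈ Set.Icc (0 : ℝ) 1) {t : ℝ} (ht : 0 ≤ t) :
    μ.real {ω | ∑ i, Y i ω + t ≤ ∑ i, μ[Y i]} ≤ exp (-2 * t ^ 2 / Fintype.card ι) := by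
  have hsubG : ∀ i ∈ (univ : Finset ι),
      HasSubgaussianMGF (fun ω ↦ μ[Y i] - Y i ω) ((‖(1 : ℝ) - 0‖₊ / 2) ^ 2) μ := fun i _ ↦
    (hasSubgaussianMGF_of_mem_Icc (hmeas i) (hY i)).neg.congr
      (ae_of_all _ fun ω ↦ by simp)
  have hindep' : iIndepFun (fun i ω ↦ μ[Y i] - Y i ω) μ :=
    hindep.comp (fun i y ↦ ∫ ω, Y i ω ∂μ - y) fun _ ↦ measurable_const.sub measurable_id
  calc μ.real {ω | ∑ i, Y i ω + t ≤ ∑ i, μ[Y i]}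
      = μ.real {ω | t ≤ ∑ i, (μ[Y i] - Y i ω)} := by
        congr with ω
        rw [sum_sub_distrib]
        constructor <;> intro h <;> linarith
    _ ≤ exp (-t ^ 2 / (2 * ((∑ _i : ι, (‖(1 : ℝ) - 0‖₊ / 2) ^ 2 : ℝ≥0) : ℝ))) :=
        HasSubgaussianMGF.measure_sum_ge_le_of_iIndepFun hindep' hsubG ht
    _ = exp (-2 * t ^ 2 / Fintype.card ι) := by
        congr 1
        simp only [sum_const, card_univ, nsmul_eq_mul, sub_zero, nnnorm_one]
        push_cast
        ring

theorem measureReal_two_mul_card_mem_le_le {X ι : Type*} [MeasurableSpace X] [Fintype ι]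
    {w : ι → Ω → X} (hmeas : ∀ i, Measurable (w i)) (hindep : iIndepFun w μ) {S : Set X}
    (hS : MeasurableSet S) {p : ℝ} (hp : 1 / 2 ≤ p) (hwS : ∀ i, p ≤ μ.real (w i ⁻¹' S)) :
    μ.real {ω | 2 * #{i | w i ω ∈ S} ≤ Fintype.card ι} ≤
      exp (-2 * Fintype.card ι * (p - 1 / 2) ^ 2) := by
  set n : ℝ := (Fintype.card ι : ℝ)
  set Y : ι → Ω → ℝ := fun i ↦ (w i ⁻¹' S).indicator 1
  have hY_mean : n * p ≤ ∑ i, μ[Y i] := by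
    simpa [n, Y, integral_indicator_one (hmeas _ hS), mul_comm] using
      sum_le_sum fun i (_ : i ∈ univ) ↦ hwS i
  have hY_count : ∀ ω, ∑ i, Y i ω = #{i | w i ω ∈ S} := fun ω ↦ by
    simp [Y, Set.indicator_apply]
  calc μ.real {ω | 2 * #{i | w i ω ∈ S} ≤ Fintype.card ι}
      ≤ μ.real {ω | ∑ i, Y i ω + n * (p - 1 / 2) ≤ ∑ i, μ[Y i]} := by
        refine measureReal_mono (fun ω hω ↦ ?_)
        have hω' : 2 * (#{i | w i ω ∈ S} : ℝ) ≤ n := by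
          simp only [n]
          exact_mod_cast hω
        simp only [Set.mem_ofPred_eq, hY_count]
        linarith
    _ ≤ exp (-2 * (n * (p - 1 / 2)) ^ 2 / n) :=
        measureReal_sum_add_le_sum_integral_le
          (hindep.comp _ fun _ ↦ measurable_one.indicator hS)
          (fun i ↦ (measurable_one.indicator (hmeas i hS)).aemeasurable)
          (fun i ↦ ae_of_all _ fun ω ↦ by by_cases h : w i ω ∈ S <;> simp [h])
          (mul_nonneg (Nat.cast_nonneg _) (by linarith))
    _ = exp (-2 * n * (p - 1 / 2) ^ 2) := by
        congr 1
        rcases eq_or_ne n 0 with hn | hn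
        · simp [hn]
        · field_simp

theorem ofReal_one_sub_le_measure_of_compl_subset {s t : Set Ω} {q : ℝ} (hst : sᶜ ⊆ t)
    (hs : μ.real s ≤ q) : ENNReal.ofReal (1 - q) ≤ μ t := by
  have := (measureReal_union_le (μ := μ) s sᶜ).trans
    (add_le_add_right (measureReal_mono hst) _)
  rw [Set.union_compl_self, probReal_univ] at this
  rw [← ofReal_measureReal (μ := μ)]
  exact ENNReal.ofReal_le_ofReal (by linarith)

end Probability

section MajorityRadius

variable {X ι : Type*} [MetricSpace X] [Fintype ι]

/-- `sInf (majorityRadii v (v i))` is the radius `rᵢ` of the paper. -/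
def majorityRadii (v : ι → X) (x : X) : Set ℝ :=
  {t | 0 ≤ t ∧ (Fintype.card ι : ℝ) < 2 * #{j | dist x (v j) ≤ t}}

theorem majorityRadii_nonempty [Nonempty ι] (v : ι → X) (x : X) :
    (majorityRadii v x).Nonempty := by
  refine ⟨∑ j, dist x (v j), sum_nonneg fun j _ ↦ dist_nonneg, ?_⟩
  rw [filter_true_of_mem fun j _ ↦ single_le_sum (fun j _ ↦ dist_nonneg) (mem_univ j),
    card_univ]
  have : (0 : ℝ) < Fintype.card ι := by exact_mod_cast Fintype.card_pos
  linarith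

theorem dist_le_add_of_majority {v : ι → X} {x y : X} {s t : ℝ}
    (hx : (Fintype.card ι : ℝ) < 2 * #{j | dist x (v j) ≤ s})
    (hy : (Fintype.card ι : ℝ) < 2 * #{j | dist y (v j) ≤ t}) :
    dist x y ≤ s + t := by
  have hcard : (Fintype.card ι : ℝ) < #{j | dist x (v j) ≤ s} + #{j | dist y (v j) ≤ t} := by
    linarith
  obtain ⟨j, hj⟩ := inter_nonempty_of_card_lt_card_add_card (subset_univ _) (subset_univ _)
    (t := {j | dist x (v j) ≤ s}) (u := {j | dist y (v j) ≤ t})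
    (by rw [card_univ]; exact_mod_cast hcard)
  simp only [mem_inter, mem_filter, mem_univ, true_and] at hj
  calc dist x y ≤ dist x (v j) + dist y (v j) := dist_triangle_right _ _ _
    _ ≤ s + t := add_le_add hj.1 hj.2

theorem dist_le_three_mul_of_sInf_majorityRadii_le {v : ι → X} {x : X} {ε : ℝ}
    (hx : (Fintype.card ι : ℝ) < 2 * #{j | dist x (v j) ≤ ε}) {i₀ : ι}
    (hmin : ∀ i, sInf (majorityRadii v (v i₀)) ≤ sInf (majorityRadii v (v i))) :
    dist x (v i₀) ≤ 3 * ε := by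
  have : Nonempty ι := ⟨i₀⟩
  obtain ⟨i₁, -, hi₁⟩ : ∃ i ∈ (univ : Finset ι), dist x (v i) ≤ ε := by
    by_contra! h
    rw [filter_false_of_mem fun i _ ↦ (h i (mem_univ i)).not_ge] at hx
    simp only [card_empty, CharP.cast_eq_zero, mul_zero] at hx
    exact hx.not_ge (Nat.cast_nonneg _)
  have h2ε : 2 * ε ∈ majorityRadii v (v i₁) := by
    have hsub : ({j | dist x (v j) ≤ ε} : Finset ι) ⊆
        ({j | dist (v i₁) (v j) ≤ 2 * ε} : Finset ι) :=
      monotone_filter_right _ fun j _ hj ↦ by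
        linarith [dist_triangle_left (v i₁) (v j) x]
    refine ⟨by linarith [dist_nonneg (x := x) (y := v i₁)], hx.trans_le ?_⟩
    exact mul_le_mul_of_nonneg_left (by exact_mod_cast card_le_card hsub) two_pos.le
  have hr₀ : sInf (majorityRadii v (v i₀)) ≤ 2 * ε :=
    (hmin i₁).trans (csInf_le ⟨0, fun _ h ↦ h.1⟩ h2ε)
  -- Instead of showing that the infimum is attained, use majority radii just above it.
  refine le_of_forall_pos_lt_add fun δ hδ ↦ ?_
  obtain ⟨t, ht, htδ⟩ := exists_lt_of_csInf_lt (majorityRadii_nonempty v (v i₀))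
    (lt_add_of_pos_right _ hδ)
  calc dist x (v i₀) ≤ ε + t := dist_le_add_of_majority hx ht.2
    _ < 3 * ε + δ := by linarith

end MajorityRadius

theorem stmt2_general {X : Type*} [MetricSpace X] [MeasurableSpace X] [OpensMeasurableSpace X]
    {Ω : Type*} [MeasurableSpace Ω] (P : Measure Ω) [IsProbabilityMeasure P]
    {k : ℕ}
    (wopt : X) (ε : ℝ)
    (w : Fin k → Ω → X) (hmeas : ∀ i, Measurable (w i))
    (hindep : iIndepFun w P)
    (happrox : ∀ i, P {ω | dist wopt (w i ω) ≤ ε} ≥ ENNReal.ofReal (2 / 3))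
    (r : Fin k → Ω → ℝ)
    (hr : ∀ i ω, r i ω = sInf {t : ℝ | 0 ≤ t ∧
      (k : ℝ) < 2 * ((Finset.univ.filter fun j => dist (w i ω) (w j ω) ≤ t).card : ℝ)})
    (iopt : Ω → Fin k) (hiopt : ∀ ω i, r (iopt ω) ω ≤ r i ω) :
    P {ω | dist wopt (w (iopt ω) ω) ≤ 3 * ε} ≥
      ENNReal.ofReal (1 - Real.exp (-(k : ℝ) / 18)) := by
  have hnear : MeasurableSet {x : X | dist wopt x ≤ ε} :=
    measurableSet_le (continuous_const.dist continuous_id).measurable measurable_const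
  have hbad := measureReal_two_mul_card_mem_le_le hmeas hindep hnear (p := 2 / 3) (by norm_num)
    fun i ↦ (ENNReal.ofReal_le_iff_le_toReal (by finiteness)).mp (happrox i)
  refine ofReal_one_sub_le_measure_of_compl_subset (fun ω hω ↦ ?_) (hbad.trans_eq ?_)
  · have hmajor : (Fintype.card (Fin k) : ℝ) < 2 * #{j | dist wopt (w j ω) ≤ ε} := by
      rw [Fintype.card_fin]
      exact_mod_cast (show k < 2 * #{j | dist wopt (w j ω) ≤ ε} by simpa using hω)
    refine dist_le_three_mul_of_sInf_majorityRadii_le hmajor fun i ↦ ?_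
    simpa only [hr, majorityRadii, Fintype.card_fin] using hiopt ω i
  · rw [Fintype.card_fin]
    congr 1
    ring

/-- **Robust approximation (Algorithm 2 / Proposition 4).**  Let `(X, ρ)` be a metric space,
`wopt ∈ X`, `ε > 0`, and let `w₁, …, w_k` be independent `X`-valued random variables each
satisfying `P[ρ(wopt, wᵢ) ≤ ε] ≥ 2/3`.  For each `i`, let
`rᵢ := min { r ≥ 0 : |B(wᵢ, r) ∩ W| > k/2 }` where `W = {w₁, …, w_k}`, and let
`ŵ := w_{iopt}` for `iopt ∈ argminᵢ rᵢ`.  Then with probability at least `1 - e^{-k/18}`,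
`ρ(wopt, ŵ) ≤ 3 ε`. -/
theorem stmt2 {X : Type*} [MetricSpace X] [MeasurableSpace X] [OpensMeasurableSpace X]
    {Ω : Type*} [MeasurableSpace Ω] (P : Measure Ω) [IsProbabilityMeasure P]
    {k : ℕ} (hk : 0 < k)
    (wopt : X) (ε : ℝ) (hε : 0 < ε)
    (w : Fin k → Ω → X) (hmeas : ∀ i, Measurable (w i))
    (hindep : iIndepFun w P)
    (happrox : ∀ i, P {ω | dist wopt (w i ω) ≤ ε} ≥ ENNReal.ofReal (2 / 3))
    (r : Fin k → Ω → ℝ)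
    (hr : ∀ i ω, r i ω = sInf {t : ℝ | 0 ≤ t ∧
      (k : ℝ) < 2 * ((Finset.univ.filter fun j => dist (w i ω) (w j ω) ≤ t).card : ℝ)})
    (iopt : Ω → Fin k) (hiopt : ∀ ω i, r (iopt ω) ω ≤ r i ω) :
    P {ω | dist wopt (w (iopt ω) ω) ≤ 3 * ε} ≥
      ENNReal.ofReal (1 - Real.exp (-(k : ℝ) / 18)) :=
  stmt2_general P wopt ε w hmeas hindep happrox r hr iopt hiopt
end

section
/- Let Ψ ∈ ℝ^{n×d}, ε ∈ ℝ^n, and y = Ψ w_opt + ε, and let ŵ ∈ argmin_w (1/2)‖Ψw − y‖₂² + λ‖w‖₁ for some λ > 0. Assume |supp(w_opt)| = s and γ(Ψ,s) > 0. If ‖Ψ^T ε‖_∞ ≤ λ/2, then ‖ŵ − w_opt‖₂ ≤ 12λ√s / γ(Ψ,s)². -/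
open scoped Classical

/-- The ℓ¹ norm of a vector in `ℝ^d`. -/
noncomputable def l1norm {d : ℕ} (u : Fin d → ℝ) : ℝ := ∑ j, |u j|

/-- The Euclidean (ℓ²) norm of a vector in `ℝ^d`. -/
noncomputable def l2norm {d : ℕ} (u : Fin d → ℝ) : ℝ := Real.sqrt (∑ j, u j ^ 2)

/-- `‖u_[s]‖₁`: the ℓ¹ norm of the `s` largest coordinates of `u` in absolute value. -/
noncomputable def topL1 {d : ℕ} (s : ℕ) (u : Fin d → ℝ) : ℝ :=
  sSup ((fun J : Finset (Fin d) => ∑ j ∈ J, |u j|) '' {J | J.card = s})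

/-- `‖u_[s]‖₂`: the ℓ² norm of the `s` largest coordinates of `u` in absolute value. -/
noncomputable def topL2 {d : ℕ} (s : ℕ) (u : Fin d → ℝ) : ℝ :=
  sSup ((fun J : Finset (Fin d) => Real.sqrt (∑ j ∈ J, u j ^ 2)) '' {J | J.card = s})

/-- The cone `E_s = { u ≠ 0 : ‖u_{[s]^C}‖₁ ≤ 3 ‖u_[s]‖₁ }`
(note `‖u_{[s]^C}‖₁ = ‖u‖₁ − ‖u_[s]‖₁`). -/
def Econe {d : ℕ} (s : ℕ) (u : Fin d → ℝ) : Prop :=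
  u ≠ 0 ∧ l1norm u - topL1 s u ≤ 3 * topL1 s u

/-- The restricted eigenvalue constant `γ(Ψ, s) = min_{u ∈ E_s} ‖Ψu‖₂ / ‖u_[s]‖₂`. -/
noncomputable def gammaRE {n d : ℕ} (Ψ : Matrix (Fin n) (Fin d) ℝ) (s : ℕ) : ℝ :=
  sInf ((fun u : Fin d → ℝ => l2norm (Ψ.mulVec u) / topL2 s u) '' {u | Econe s u})

open Matrix

/-!
With `u = ŵ - wopt` and `S = supp wopt`, comparing the objective at `ŵ` and at `wopt` and
bounding the cross term `⟨Ψu, ε⟩ = ⟨u, Ψᵀε⟩` by `(λ/2)‖u‖₁` gives the basic inequality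
`‖Ψu‖₂² ≤ 3λ‖u_S‖₁ - λ‖u_{Sᶜ}‖₁`. Hence `u` lies in the cone `E_s`, so the restricted eigenvalue
bound `γ ‖u_[s]‖₂ ≤ ‖Ψu‖₂` applies, and with Cauchy–Schwarz `‖u_S‖₁ ≤ √s ‖u_[s]‖₂` it yields
`γ² ‖u_[s]‖₂ ≤ 3λ√s`. Finally, on the cone the tail of `u` is controlled by its top `s`
coordinates, `‖u‖₂ ≤ 2 ‖u_[s]‖₂`.
-/

section TopCoordinates

variable {d s : ℕ}

lemma l1norm_pos {u : Fin d → ℝ} (hu : u ≠ 0) : 0 < l1norm u := by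
  obtain ⟨j, hj⟩ := Function.ne_iff.mp hu
  exact lt_of_lt_of_le (abs_pos.mpr hj)
    (Finset.single_le_sum (fun i _ => abs_nonneg (u i)) (Finset.mem_univ j))

lemma bddAbove_image_card_eq (f : Finset (Fin d) → ℝ) :
    BddAbove (f '' {J : Finset (Fin d) | J.card = s}) :=
  ((Set.toFinite _).image f).bddAbove

lemma sum_abs_le_topL1 (u : Fin d → ℝ) {J : Finset (Fin d)} (hJ : J.card = s) :
    ∑ j ∈ J, |u j| ≤ topL1 s u :=
  le_csSup (bddAbove_image_card_eq _) ⟨J, hJ, rfl⟩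

lemma sqrt_sum_sq_le_topL2 (u : Fin d → ℝ) {J : Finset (Fin d)} (hJ : J.card = s) :
    √(∑ j ∈ J, u j ^ 2) ≤ topL2 s u :=
  le_csSup (bddAbove_image_card_eq _) ⟨J, hJ, rfl⟩

lemma topL2_nonneg (u : Fin d → ℝ) : 0 ≤ topL2 s u :=
  Real.sSup_nonneg fun _ ⟨_, _, hJ⟩ => hJ ▸ Real.sqrt_nonneg _

lemma exists_topL1_eq_sum (hsd : s ≤ d) (u : Fin d → ℝ) :
    ∃ J : Finset (Fin d), J.card = s ∧ topL1 s u = ∑ j ∈ J, |u j| ∧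
      ∀ k ∉ J, ∀ j ∈ J, |u k| ≤ |u j| := by
  have hne : (Finset.powersetCard s (Finset.univ : Finset (Fin d))).Nonempty :=
    Finset.powersetCard_nonempty.mpr (by simpa using hsd)
  obtain ⟨J, hJmem, hJmax⟩ := Finset.exists_max_image _ (fun J => ∑ j ∈ J, |u j|) hne
  have hJ : J.card = s := (Finset.mem_powersetCard.mp hJmem).2
  have hmax : ∀ J' : Finset (Fin d), J'.card = s → ∑ j ∈ J', |u j| ≤ ∑ j ∈ J, |u j| :=
    fun J' hJ' => hJmax J' (Finset.mem_powersetCard.mpr ⟨Finset.subset_univ _, hJ'⟩)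
  refine ⟨J, hJ, ?_, fun k hk j hj => ?_⟩
  · refine le_antisymm (csSup_le ⟨_, J, hJ, rfl⟩ ?_) (sum_abs_le_topL1 u hJ)
    rintro _ ⟨J', hJ', rfl⟩
    exact hmax J' hJ'
  · -- otherwise exchanging `j` for `k` would increase the sum
    by_contra! hlt
    have hkJ : k ∉ J.erase j := fun h => hk (Finset.mem_of_mem_erase h)
    have hswap := hmax (insert k (J.erase j)) (by
      rw [Finset.card_insert_of_notMem hkJ, Finset.card_erase_add_one hj, hJ])
    rw [Finset.sum_insert hkJ, ← Finset.sum_erase_add J _ hj] at hswap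
    linarith

lemma sum_abs_le_sqrt_mul_topL2 (u : Fin d → ℝ) {J : Finset (Fin d)} (hJ : J.card = s) :
    ∑ j ∈ J, |u j| ≤ √s * topL2 s u := by
  have hCS : (∑ j ∈ J, |u j|) ^ 2 ≤ s * ∑ j ∈ J, u j ^ 2 := by
    simpa only [sq_abs, hJ] using sq_sum_le_card_mul_sum_sq (s := J) (f := fun j => |u j|)
  calc ∑ j ∈ J, |u j| ≤ √(s * ∑ j ∈ J, u j ^ 2) :=
        Real.le_sqrt_of_sq_le hCS
    _ = √s * √(∑ j ∈ J, u j ^ 2) := Real.sqrt_mul (Nat.cast_nonneg s) _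
    _ ≤ √s * topL2 s u := by gcongr; exact sqrt_sum_sq_le_topL2 u hJ

end TopCoordinates

lemma sum_sq_compl_le_of_dominates {ι : Type*} [Fintype ι] [DecidableEq ι] {u : ι → ℝ}
    {J : Finset ι} {c : ℝ}
    (hJ : J.Nonempty) (hdom : ∀ k ∉ J, ∀ j ∈ J, |u k| ≤ |u j|) (hc : 0 ≤ c)
    (htail : ∑ k ∈ Jᶜ, |u k| ≤ c * ∑ j ∈ J, |u j|) :
    ∑ k ∈ Jᶜ, u k ^ 2 ≤ c * ∑ j ∈ J, u j ^ 2 := by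
  set T := ∑ j ∈ J, |u j|
  have hT : 0 ≤ T := Finset.sum_nonneg fun j _ => abs_nonneg (u j)
  have hdom_avg : ∀ k ∈ Jᶜ, J.card * |u k| ≤ T := fun k hk => by
    simpa using Finset.sum_le_sum (hdom k (Finset.mem_compl.mp hk))
  have hCS : T ^ 2 ≤ J.card * ∑ j ∈ J, u j ^ 2 := by
    simpa only [sq_abs] using sq_sum_le_card_mul_sum_sq (s := J) (f := fun j => |u j|)
  have hcard : (0 : ℝ) < J.card := by exact_mod_cast hJ.card_pos
  refine le_of_mul_le_mul_left ?_ hcard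
  calc J.card * ∑ k ∈ Jᶜ, u k ^ 2 = ∑ k ∈ Jᶜ, (J.card * |u k|) * |u k| := by
        rw [Finset.mul_sum]
        exact Finset.sum_congr rfl fun k _ => by rw [← sq_abs]; ring
    _ ≤ ∑ k ∈ Jᶜ, T * |u k| :=
        Finset.sum_le_sum fun k hk => mul_le_mul_of_nonneg_right (hdom_avg k hk) (abs_nonneg _)
    _ = T * ∑ k ∈ Jᶜ, |u k| := Finset.mul_sum _ _ _ |>.symm
    _ ≤ T * (c * T) := by gcongr
    _ = c * T ^ 2 := by ring
    _ ≤ J.card * (c * ∑ j ∈ J, u j ^ 2) := by nlinarith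

section Cone

variable {d s : ℕ} {u : Fin d → ℝ}

lemma Econe.of_sum_compl_le {S : Finset (Fin d)} (hS : S.card = s) (hu : u ≠ 0)
    (htail : ∑ j ∈ Sᶜ, |u j| ≤ 3 * ∑ j ∈ S, |u j|) : Econe s u := by
  have hsplit : l1norm u = ∑ j ∈ S, |u j| + ∑ j ∈ Sᶜ, |u j| := (Finset.sum_add_sum_compl S _).symm
  have htop := sum_abs_le_topL1 u hS
  exact ⟨hu, by linarith⟩

lemma Econe.l2norm_le_two_mul_topL2 (hsd : s ≤ d) (hu : Econe s u) :
    l2norm u ≤ 2 * topL2 s u := by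
  obtain ⟨J, hJ, htop, hdom⟩ := exists_topL1_eq_sum hsd u
  have hsplit : l1norm u = ∑ j ∈ J, |u j| + ∑ j ∈ Jᶜ, |u j| := (Finset.sum_add_sum_compl J _).symm
  have hJne : J.Nonempty := by
    by_contra hJe
    rw [Finset.not_nonempty_iff_eq_empty.mp hJe, Finset.sum_empty] at htop
    have := hu.2
    linarith [l1norm_pos hu.1]
  have htail := sum_sq_compl_le_of_dominates hJne hdom (by norm_num : (0 : ℝ) ≤ 3)
    (by have := hu.2; linarith)
  have htopJ := sqrt_sum_sq_le_topL2 u hJ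
  rw [Real.sqrt_le_iff] at htopJ
  rw [l2norm, Real.sqrt_le_iff, ← Finset.sum_add_sum_compl J]
  exact ⟨by linarith [htopJ.1], by nlinarith [htopJ.2]⟩

end Cone

lemma gammaRE_nonneg {n d : ℕ} (Ψ : Matrix (Fin n) (Fin d) ℝ) (s : ℕ) : 0 ≤ gammaRE Ψ s :=
  Real.sInf_nonneg fun _ ⟨_, _, hv⟩ => hv ▸ div_nonneg (Real.sqrt_nonneg _) (topL2_nonneg _)

lemma Econe.gammaRE_mul_topL2_le {n d s : ℕ} (Ψ : Matrix (Fin n) (Fin d) ℝ) {u : Fin d → ℝ}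
    (hu : Econe s u) : gammaRE Ψ s * topL2 s u ≤ l2norm (Ψ *ᵥ u) := by
  rcases (topL2_nonneg (s := s) u).eq_or_lt with h0 | hpos
  · rw [← h0, mul_zero]
    exact Real.sqrt_nonneg _
  · rw [← le_div_iff₀ hpos]
    refine csInf_le ⟨0, ?_⟩ ⟨u, hu, rfl⟩
    rintro _ ⟨v, _, rfl⟩
    exact div_nonneg (Real.sqrt_nonneg _) (topL2_nonneg _)

lemma Econe.gammaRE_sq_mul_topL2_le {n d s : ℕ} (Ψ : Matrix (Fin n) (Fin d) ℝ)
    {u : Fin d → ℝ} {c : ℝ} (hu : Econe s u) (hc : 0 ≤ c)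
    (h : ∑ i, (Ψ *ᵥ u) i ^ 2 ≤ c * topL2 s u) : gammaRE Ψ s ^ 2 * topL2 s u ≤ c := by
  rcases (topL2_nonneg (s := s) u).eq_or_lt with h0 | hpos
  · rwa [← h0, mul_zero]
  refine le_of_mul_le_mul_right ?_ hpos
  have hRE := hu.gammaRE_mul_topL2_le Ψ
  have hl2 : l2norm (Ψ *ᵥ u) ^ 2 = ∑ i, (Ψ *ᵥ u) i ^ 2 :=
    Real.sq_sqrt (Finset.sum_nonneg fun i _ => sq_nonneg _)
  calc gammaRE Ψ s ^ 2 * topL2 s u * topL2 s u = (gammaRE Ψ s * topL2 s u) ^ 2 := by ring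
    _ ≤ l2norm (Ψ *ᵥ u) ^ 2 :=
        pow_le_pow_left₀ (mul_nonneg (gammaRE_nonneg Ψ s) hpos.le) hRE 2
    _ ≤ c * topL2 s u := hl2 ▸ h

section Lasso

variable {n d : ℕ} (Ψ : Matrix (Fin n) (Fin d) ℝ) (ε : Fin n → ℝ)

lemma mulVec_dotProduct_le_l1norm {lam : ℝ} (hinf : ∀ j, |(Ψᵀ *ᵥ ε) j| ≤ lam / 2)
    (u : Fin d → ℝ) : (Ψ *ᵥ u) ⬝ᵥ ε ≤ lam / 2 * l1norm u := by
  rw [dotProduct_comm, dotProduct_mulVec, ← mulVec_transpose, l1norm,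
    Finset.mul_sum]
  refine Finset.sum_le_sum fun j _ => ?_
  calc (Ψᵀ *ᵥ ε) j * u j ≤ |(Ψᵀ *ᵥ ε) j| * |u j| := (le_abs_self _).trans (abs_mul _ _).le
    _ ≤ lam / 2 * |u j| := by gcongr; exact hinf j

lemma l1norm_sub_l1norm_le {w w' : Fin d → ℝ} {S : Finset (Fin d)} (hS : ∀ j ∉ S, w j = 0) :
    l1norm w - l1norm w' ≤ ∑ j ∈ S, |(w' - w) j| - ∑ j ∈ Sᶜ, |(w' - w) j| := by
  rw [l1norm, l1norm, ← Finset.sum_add_sum_compl S (fun j => |w j|),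
    ← Finset.sum_add_sum_compl S (fun j => |w' j|)]
  have hon : ∑ j ∈ S, |w j| - ∑ j ∈ S, |w' j| ≤ ∑ j ∈ S, |(w' - w) j| := by
    rw [← Finset.sum_sub_distrib]
    exact Finset.sum_le_sum fun j _ => by
      rw [Pi.sub_apply, abs_sub_comm]; exact abs_sub_abs_le_abs_sub _ _
  have hoff : ∀ j ∈ Sᶜ, |w j| = 0 ∧ |(w' - w) j| = |w' j| := fun j hj => by
    simp [hS j (Finset.mem_compl.mp hj)]
  rw [Finset.sum_congr rfl fun j hj => (hoff j hj).1,
    Finset.sum_congr rfl fun j hj => (hoff j hj).2]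
  simp only [Finset.sum_const_zero]
  linarith

lemma lasso_basic_inequality {lam : ℝ} (hlam : 0 ≤ lam) {wopt what : Fin d → ℝ} {y : Fin n → ℝ}
    (hy : y = Ψ *ᵥ wopt + ε)
    (hmin : (1 / 2) * (∑ i, ((Ψ *ᵥ what) i - y i) ^ 2) + lam * l1norm what ≤
      (1 / 2) * (∑ i, ((Ψ *ᵥ wopt) i - y i) ^ 2) + lam * l1norm wopt)
    (hinf : ∀ j, |(Ψᵀ *ᵥ ε) j| ≤ lam / 2) {S : Finset (Fin d)} (hS : ∀ j ∉ S, wopt j = 0) :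
    ∑ i, (Ψ *ᵥ (what - wopt)) i ^ 2 ≤
      3 * lam * ∑ j ∈ S, |(what - wopt) j| - lam * ∑ j ∈ Sᶜ, |(what - wopt) j| := by
  set v := Ψ *ᵥ (what - wopt)
  have hfit : ∑ i, ((Ψ *ᵥ what) i - y i) ^ 2 = ∑ i, v i ^ 2 - 2 * (v ⬝ᵥ ε) + ∑ i, ε i ^ 2 := by
    simp only [dotProduct, Finset.mul_sum, ← Finset.sum_sub_distrib, ← Finset.sum_add_distrib]
    refine Finset.sum_congr rfl fun i _ => ?_
    simp only [v, hy, mulVec_sub, Pi.add_apply, Pi.sub_apply]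
    ring
  have hfit_opt : ∑ i, ((Ψ *ᵥ wopt) i - y i) ^ 2 = ∑ i, ε i ^ 2 :=
    Finset.sum_congr rfl fun i _ => by rw [hy, Pi.add_apply]; ring
  have hcross := mulVec_dotProduct_le_l1norm Ψ ε hinf (what - wopt)
  have hl1 := mul_le_mul_of_nonneg_left (l1norm_sub_l1norm_le (w' := what) hS) hlam
  have hsplit : l1norm (what - wopt) = ∑ j ∈ S, |(what - wopt) j| + ∑ j ∈ Sᶜ, |(what - wopt) j| :=
    (Finset.sum_add_sum_compl S _).symm
  rw [hfit, hfit_opt] at hmin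
  nlinarith

end Lasso

/-- **Theorem 16 (Lasso parameter estimation, fixed design).**  Let `y = Ψ wopt + ε` and
let `ŵ` minimize `(1/2)‖Ψw − y‖₂² + λ‖w‖₁`.  Assume `|supp(wopt)| = s` and
`γ(Ψ, s) > 0`.  If `‖Ψᵀε‖_∞ ≤ λ/2`, then `‖ŵ − wopt‖₂ ≤ 12 λ √s / γ(Ψ,s)²`. -/
theorem stmt10 {n d : ℕ} (Ψ : Matrix (Fin n) (Fin d) ℝ) (ε : Fin n → ℝ)
    (wopt : Fin d → ℝ) (y : Fin n → ℝ) (hy : y = Ψ.mulVec wopt + ε)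
    (s : ℕ) (hs : (Finset.univ.filter fun j => wopt j ≠ 0).card = s)
    (hγ : 0 < gammaRE Ψ s)
    (lam : ℝ) (hlam : 0 < lam)
    (what : Fin d → ℝ)
    (hmin : ∀ w : Fin d → ℝ,
      (1 / 2) * (∑ i, (Ψ.mulVec what i - y i) ^ 2) + lam * l1norm what ≤
        (1 / 2) * (∑ i, (Ψ.mulVec w i - y i) ^ 2) + lam * l1norm w)
    (hinf : ∀ j : Fin d, |Ψ.transpose.mulVec ε j| ≤ lam / 2) :
    l2norm (what - wopt) ≤ 12 * lam * Real.sqrt s / gammaRE Ψ s ^ 2 := by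
  set u := what - wopt
  by_cases hu : u = 0
  · rw [hu, show l2norm (0 : Fin d → ℝ) = 0 by simp [l2norm]]
    positivity
  set S := Finset.univ.filter fun j => wopt j ≠ 0
  have hbasic : ∑ i, (Ψ *ᵥ u) i ^ 2 ≤ 3 * lam * ∑ j ∈ S, |u j| - lam * ∑ j ∈ Sᶜ, |u j| :=
    lasso_basic_inequality Ψ ε hlam.le hy (hmin wopt) hinf (by simp [S])
  have hsq : 0 ≤ ∑ i, (Ψ *ᵥ u) i ^ 2 := Finset.sum_nonneg fun i _ => sq_nonneg _
  have hcone : Econe s u := .of_sum_compl_le hs hu (le_of_mul_le_mul_left (by linarith) hlam)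
  have hfit : ∑ i, (Ψ *ᵥ u) i ^ 2 ≤ 3 * lam * √s * topL2 s u := by
    have hS_le := mul_le_mul_of_nonneg_left (sum_abs_le_sqrt_mul_topL2 u hs)
      (by positivity : (0 : ℝ) ≤ 3 * lam)
    have hSc : 0 ≤ lam * ∑ j ∈ Sᶜ, |u j| := by positivity
    linarith
  have hRE : gammaRE Ψ s ^ 2 * topL2 s u ≤ 3 * lam * √s :=
    hcone.gammaRE_sq_mul_topL2_le Ψ (by positivity) hfit
  have htop : topL2 s u ≤ 3 * lam * √s / gammaRE Ψ s ^ 2 := by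
    rw [le_div_iff₀ (by positivity), mul_comm]; exact hRE
  have hsd : s ≤ d := hs ▸ (Finset.card_le_univ _).trans_eq (Fintype.card_fin d)
  calc l2norm u ≤ 2 * topL2 s u := hcone.l2norm_le_two_mul_topL2 hsd
    _ ≤ 2 * (3 * lam * √s / gammaRE Ψ s ^ 2) := by gcongr
    _ = 6 * lam * √s / gammaRE Ψ s ^ 2 := by ring
    _ ≤ 12 * lam * √s / gammaRE Ψ s ^ 2 := by gcongr; norm_num
end

section
/- Let (X,ρ) be a metric space, W ⊆ X a finite multiset of size k ≥ 2, w_opt ∈ X, and α ∈ (0,1/2). Define sumd(w) := Σ_{v∈W} ρ(w,v). Let y ∈ argmin_{w∈W} sumd(w). Then ρ(w_opt, y) ≤ (2 + 1/(2α))·Δ_W(w_opt, α). -/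
/-!
Let `A` be the set of points of `W` within `Δ = Δ_W(wopt, α)` of `wopt`; it has more than
`k (1/2 + α)` elements because the infimum defining `Δ` is attained (the set of admissible radii
is a finite union of closed half-lines). Compare `y` with the point `a ∈ A` nearest to it: points of `A` are within
`2Δ` of `a`, points outside `A` are reached from `a` through `y`, and every point of `A` is at
least `ρ(y, a)` from `y`. Since `sumd y ≤ sumd a`, this gives `(|A| - |Aᶜ|) ρ(y, a) ≤ 2Δ |A|`.
With `ρ(wopt, y) ≤ Δ + ρ(y, a)` it becomes `(|A| - |Aᶜ|) (ρ(wopt, y) - 2Δ) ≤ kΔ`, and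
`|A| - |Aᶜ| > 2αk`.
-/

open scoped Classical

open Finset

lemma isClosed_setOf_lt_card_filter_le {ι : Type*} [Fintype ι] (d : ι → ℝ) (t : ℝ) :
    IsClosed {r : ℝ | t < #(univ.filter fun i => d i ≤ r)} := by
  have hunion : {r : ℝ | t < #(univ.filter fun i => d i ≤ r)} =
      ⋃ s ∈ {s : Finset ι | t < #s}, ⋂ i ∈ s, Set.Ici (d i) := by
    ext r
    simp only [Set.mem_ofPred_eq, Set.mem_iUnion, Set.mem_iInter, Set.mem_Ici, exists_prop]
    constructor
    · exact fun h => ⟨_, h, fun i hi => (mem_filter.1 hi).2⟩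
    · rintro ⟨s, hs, hsr⟩
      refine hs.trans_le (Nat.cast_le.2 (card_le_card fun i hi => ?_))
      exact mem_filter.2 ⟨mem_univ i, hsr i hi⟩
  rw [hunion]
  exact (Set.toFinite _).isClosed_biUnion fun s _ => isClosed_biInter fun i _ => isClosed_Ici

lemma Delta_nonneg_and_lt_card {X : Type*} [MetricSpace X] {k : ℕ} (w : Fin k → X) (x : X)
    {α : ℝ} (hk : 0 < k) (hα : α < 1 / 2) :
    0 ≤ Delta w x α ∧
      (k : ℝ) * (1 / 2 + α) < #(univ.filter fun i => dist x (w i) ≤ Delta w x α) := by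
  have hclosed : IsClosed {r : ℝ | 0 ≤ r ∧
      (k : ℝ) * (1 / 2 + α) < #(univ.filter fun i => dist x (w i) ≤ r)} :=
    isClosed_Ici.inter (isClosed_setOf_lt_card_filter_le _ _)
  refine hclosed.csInf_mem ⟨∑ i, dist x (w i), by positivity, ?_⟩ ⟨0, fun r hr => hr.1⟩
  have hall : (univ.filter fun i => dist x (w i) ≤ ∑ j, dist x (w j)) = univ :=
    filter_true_of_mem fun i _ =>
      single_le_sum (f := fun j => dist x (w j)) (fun j _ => dist_nonneg) (mem_univ i)
  rw [hall, card_univ, Fintype.card_fin]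
  have : (0 : ℝ) < k := Nat.cast_pos.2 hk
  nlinarith

section SumOfDistances

variable {X ι : Type*} [PseudoMetricSpace X] [Fintype ι] [DecidableEq ι]
  {w : ι → X} {x y : X} {Δ : ℝ} {A : Finset ι}

lemma card_sub_card_compl_mul_dist_le {a : ι} (hAx : ∀ j ∈ A, dist x (w j) ≤ Δ) (ha : a ∈ A)
    (hmin : ∀ j ∈ A, dist y (w a) ≤ dist y (w j))
    (hy : ∑ j, dist y (w j) ≤ ∑ j, dist (w a) (w j)) :
    ((#A : ℝ) - #Aᶜ) * dist y (w a) ≤ 2 * Δ * #A := by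
  have hnear : ∑ j ∈ A, dist (w a) (w j) ≤ #A * (2 * Δ) := by
    rw [← nsmul_eq_mul, ← sum_const]
    refine sum_le_sum fun j hj => ?_
    linarith [dist_triangle_left (w a) (w j) x, hAx a ha, hAx j hj]
  have hfar : ∑ j ∈ Aᶜ, dist (w a) (w j) ≤ #Aᶜ * dist y (w a) + ∑ j ∈ Aᶜ, dist y (w j) := by
    rw [← nsmul_eq_mul, ← sum_const, ← sum_add_distrib]
    exact sum_le_sum fun j _ => dist_comm y (w a) ▸ dist_triangle _ _ _
  have hy_near : #A * dist y (w a) ≤ ∑ j ∈ A, dist y (w j) := by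
    rw [← nsmul_eq_mul, ← sum_const]
    exact sum_le_sum hmin
  rw [← sum_add_sum_compl A, ← sum_add_sum_compl A] at hy
  linarith

lemma card_sub_card_compl_mul_dist_sub_le (hA : A.Nonempty) (hAx : ∀ j ∈ A, dist x (w j) ≤ Δ)
    (hy : ∀ a ∈ A, ∑ j, dist y (w j) ≤ ∑ j, dist (w a) (w j)) (hAc : #Aᶜ ≤ #A) :
    ((#A : ℝ) - #Aᶜ) * (dist x y - 2 * Δ) ≤ Δ * Fintype.card ι := by
  obtain ⟨a, ha, hmin⟩ := A.exists_min_image (fun j => dist y (w j)) hA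
  have hρ := card_sub_card_compl_mul_dist_le hAx ha hmin (hy a ha)
  have hxy : dist x y - 2 * Δ ≤ dist y (w a) - Δ := by
    linarith [dist_triangle_right x y (w a), hAx a ha]
  have hcard : (Fintype.card ι : ℝ) = #A + #Aᶜ := by
    rw [← card_add_card_compl A, Nat.cast_add]
  calc ((#A : ℝ) - #Aᶜ) * (dist x y - 2 * Δ)
      ≤ ((#A : ℝ) - #Aᶜ) * (dist y (w a) - Δ) :=
        mul_le_mul_of_nonneg_left hxy (sub_nonneg.2 (Nat.cast_le.2 hAc))
    _ ≤ Δ * Fintype.card ι := by rw [hcard]; linarith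

end SumOfDistances

theorem stmt14_general {X : Type*} [MetricSpace X] {k : ℕ}
    (w : Fin k → X) (wopt : X) (α : ℝ) (hα : α ∈ Set.Ioo (0 : ℝ) (1 / 2))
    (iy : Fin k)
    (hiy : ∀ i : Fin k, (∑ j, dist (w iy) (w j)) ≤ ∑ j, dist (w i) (w j)) :
    dist wopt (w iy) ≤ (2 + 1 / (2 * α)) * Delta w wopt α := by
  obtain ⟨hα0, hα2⟩ := hα
  obtain ⟨hΔ, hA⟩ := Delta_nonneg_and_lt_card w wopt iy.pos hα2
  set Δ := Delta w wopt α
  set A := univ.filter fun i => dist wopt (w i) ≤ Δ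
  have hk : (0 : ℝ) < k := Nat.cast_pos.2 iy.pos
  have hcard : (#A : ℝ) + #Aᶜ = k := by
    rw [← Nat.cast_add, card_add_card_compl, Fintype.card_fin]
  have hgap : 2 * α * k < (#A : ℝ) - #Aᶜ := by linarith
  have hAc : #Aᶜ < #A := by exact_mod_cast (show (#Aᶜ : ℝ) < #A by nlinarith)
  have hbound := card_sub_card_compl_mul_dist_sub_le (card_pos.1 ((Nat.zero_le _).trans_lt hAc))
    (fun j hj => (mem_filter.1 hj).2) (fun a _ => hiy a) hAc.le
  rw [Fintype.card_fin] at hbound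
  have hkey : 2 * α * (dist wopt (w iy) - 2 * Δ) ≤ Δ := by
    by_contra! h
    have hpos : 0 < dist wopt (w iy) - 2 * Δ := pos_of_mul_pos_right (hΔ.trans_lt h) (by positivity)
    nlinarith [mul_lt_mul_of_pos_right hgap hpos]
  have hdiv : dist wopt (w iy) - 2 * Δ ≤ Δ / (2 * α) := (le_div_iff₀' (by positivity)).2 hkey
  calc dist wopt (w iy) ≤ 2 * Δ + Δ / (2 * α) := by linarith
    _ = (2 + 1 / (2 * α)) * Δ := by ring

/-- **Theorem 19(1) (set-based geometric median).**  Let `(X, ρ)` be a metric space, `W` a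
multiset of size `k ≥ 2`, `wopt ∈ X`, `α ∈ (0, 1/2)`, and let
`y ∈ argmin_{w ∈ W} Σ_{v ∈ W} ρ(w, v)`.  Then
`ρ(wopt, y) ≤ (2 + 1/(2α)) Δ_W(wopt, α)`. -/
theorem stmt14 {X : Type*} [MetricSpace X] {k : ℕ} (hk : 2 ≤ k)
    (w : Fin k → X) (wopt : X) (α : ℝ) (hα : α ∈ Set.Ioo (0 : ℝ) (1 / 2))
    (iy : Fin k)
    (hiy : ∀ i : Fin k, (∑ j, dist (w iy) (w j)) ≤ ∑ j, dist (w i) (w j)) :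
    dist wopt (w iy) ≤ (2 + 1 / (2 * α)) * Delta w wopt α :=
  stmt14_general w wopt α hα iy hiy
end

section
/- Let (X,ρ) be a metric space, W ⊆ X a finite multiset of size k ≥ 2, w_opt ∈ X, and α ∈ (0,1/2). Define sumd(w) := Σ_{v∈W} ρ(w,v) and W₊ := W ∪ {w_opt}. Let ȳ ∈ argmin_{w∈W₊} sumd(w). Then ρ(w_opt, ȳ) ≤ (1 + 1/(2α))·Δ_W(w_opt, α). Moreover, the same bound holds for any point ȳ ∈ X with sumd(ȳ) ≤ sumd(w_opt). -/
open scoped Classical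

/-!
Let `A` be the set of points of `W` within distance `r` of `x`, with `|A| > k (1/2 + α)`, and
let `y` be at distance `D` from `x` with `sumd y ≤ sumd x`. By the triangle inequality, moving
from `x` to `y` raises the distance to each point of `A` by at least `D - 2r` and lowers the
distance to every other point by at most `D`. Hence `(2|A| - k) D ≤ 2|A| r`, and since
`2|A| - k > 2kα` this gives `D ≤ (1 + 1/(2α)) r`. Taking the infimum over admissible `r` yields
the bound with `Δ_W(x, α)`; the minimiser `ȳ` over `W₊` qualifies because `x ∈ W₊`.
-/

open Finset

theorem card_mul_dist_le_of_sum_dist_le {X ι : Type*} [PseudoMetricSpace X] [Fintype ι]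
    (w : ι → X) {x y : X} (r : ℝ) (hy : ∑ i, dist y (w i) ≤ ∑ i, dist x (w i)) :
    (2 * (#{i | dist x (w i) ≤ r} : ℝ) - Fintype.card ι) * dist x y ≤
      2 * (#{i | dist x (w i) ≤ r} : ℝ) * r := by
  set D := dist x y
  have hcard : (#{i | ¬dist x (w i) ≤ r} : ℝ) = Fintype.card ι - #{i | dist x (w i) ≤ r} := by
    rw [eq_sub_iff_add_eq, ← Nat.cast_add, add_comm, card_filter_add_card_filter_not, card_univ]
  have hpointwise : ∀ i, (if dist x (w i) ≤ r then D - 2 * r else -D) ≤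
      dist y (w i) - dist x (w i) := by
    intro i
    have hxy := dist_triangle x y (w i)
    have hyx := dist_triangle_right x y (w i)
    split_ifs with hi <;> linarith
  have hsum := sum_le_sum fun i (_ : i ∈ univ) => hpointwise i
  rw [sum_ite, sum_const, sum_const, nsmul_eq_mul, nsmul_eq_mul, hcard, sum_sub_distrib] at hsum
  linarith

theorem dist_le_of_card_mul_dist_le {a k α D r : ℝ} (hk : 0 ≤ k) (hα : 0 < α) (hr : 0 ≤ r)
    (ha : k * (1 / 2 + α) < a) (h : (2 * a - k) * D ≤ 2 * a * r) :
    D ≤ (1 + 1 / (2 * α)) * r := by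
  have hpos : 0 < 2 * a - k := by nlinarith
  have h2αD : (2 * a - k) * (2 * α * D) ≤ (2 * a - k) * ((2 * α + 1) * r) := by
    nlinarith [mul_nonneg (by linarith : 0 ≤ 2 * a - k * (2 * α + 1)) hr]
  have hbound := le_of_mul_le_mul_left h2αD hpos
  have hfactor : (1 + 1 / (2 * α)) * r = (2 * α + 1) * r / (2 * α) := by field_simp
  rw [hfactor, le_div_iff₀ (by linarith)]
  linarith

theorem le_Delta {X : Type*} [MetricSpace X] {k : ℕ} (hk : 0 < k) (w : Fin k → X) (x : X)
    {α c : ℝ} (hα : α < 1 / 2)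
    (h : ∀ r, 0 ≤ r → (k : ℝ) * (1 / 2 + α) < (#{i | dist x (w i) ≤ r} : ℝ) → c ≤ r) :
    c ≤ Delta w x α := by
  refine le_csInf ⟨∑ i, dist x (w i), ?_, ?_⟩ fun r hr => h r hr.1 hr.2
  · exact sum_nonneg fun i _ => dist_nonneg
  · have hall : #{i | dist x (w i) ≤ ∑ j, dist x (w j)} = k := by
      rw [filter_true_of_mem fun i _ => single_le_sum (fun j _ => dist_nonneg) (mem_univ i),
        card_univ, Fintype.card_fin]
    rw [hall]
    have : (0 : ℝ) < k := by exact_mod_cast hk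
    nlinarith

theorem dist_le_Delta_of_sum_dist_le {X : Type*} [MetricSpace X] {k : ℕ} (hk : 0 < k)
    (w : Fin k → X) {x y : X} {α : ℝ} (hα : α ∈ Set.Ioo (0 : ℝ) (1 / 2))
    (hy : ∑ i, dist y (w i) ≤ ∑ i, dist x (w i)) :
    dist x y ≤ (1 + 1 / (2 * α)) * Delta w x α := by
  have hc : 0 < 1 + 1 / (2 * α) := by have := hα.1; positivity
  -- bounding `dist x y / c` by every admissible radius spares us showing the infimum is attained
  rw [← div_le_iff₀' hc]
  refine le_Delta hk w x hα.2 fun r hr hcard => ?_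
  rw [div_le_iff₀' hc]
  have key := card_mul_dist_le_of_sum_dist_le w r hy
  rw [Fintype.card_fin] at key
  exact dist_le_of_card_mul_dist_le k.cast_nonneg hα.1 hr hcard key

theorem stmt15_general {X : Type*} [MetricSpace X] {k : ℕ} (hk : 2 ≤ k)
    (w : Fin k → X) (wopt : X) (α : ℝ) (hα : α ∈ Set.Ioo (0 : ℝ) (1 / 2))
    (ybar : X)
    (hybar_min : ∀ v : X, (v = wopt ∨ ∃ i : Fin k, v = w i) →
      (∑ j, dist ybar (w j)) ≤ ∑ j, dist v (w j)) :
    dist wopt ybar ≤ (1 + 1 / (2 * α)) * Delta w wopt α ∧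
      ∀ y : X, (∑ j, dist y (w j)) ≤ (∑ j, dist wopt (w j)) →
        dist wopt y ≤ (1 + 1 / (2 * α)) * Delta w wopt α :=
  have hbound := fun y => dist_le_Delta_of_sum_dist_le (by omega) w (y := y) hα
  ⟨hbound ybar (hybar_min wopt (Or.inl rfl)), hbound⟩

/-- **Theorem 19(3) (geometric median over `W₊ = W ∪ {wopt}`).**  Let `(X, ρ)` be a metric
space, `W` a multiset of size `k ≥ 2`, `wopt ∈ X`, `α ∈ (0, 1/2)`, and
`sumd(w) := Σ_{v ∈ W} ρ(w, v)`.  If `ȳ ∈ argmin_{w ∈ W₊} sumd(w)`, then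
`ρ(wopt, ȳ) ≤ (1 + 1/(2α)) Δ_W(wopt, α)`; moreover the same bound holds for any `y ∈ X`
with `sumd(y) ≤ sumd(wopt)`. -/
theorem stmt15 {X : Type*} [MetricSpace X] {k : ℕ} (hk : 2 ≤ k)
    (w : Fin k → X) (wopt : X) (α : ℝ) (hα : α ∈ Set.Ioo (0 : ℝ) (1 / 2))
    (ybar : X)
    (hybar_mem : ybar = wopt ∨ ∃ i : Fin k, ybar = w i)
    (hybar_min : ∀ v : X, (v = wopt ∨ ∃ i : Fin k, v = w i) →
      (∑ j, dist ybar (w j)) ≤ ∑ j, dist v (w j)) :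
    dist wopt ybar ≤ (1 + 1 / (2 * α)) * Delta w wopt α ∧
      ∀ y : X, (∑ j, dist y (w j)) ≤ (∑ j, dist wopt (w j)) →
        dist wopt y ≤ (1 + 1 / (2 * α)) * Delta w wopt α :=
  stmt15_general hk w wopt α hα ybar hybar_min
end

section
/- Consider ℝ^n equipped with the p-norm for p > 1, and let e_1,…,e_n be the standard basis vectors. Let r_{n,p} be the minimal r such that there exists x ∈ ℝ^n with ‖e_i − x‖_p ≤ r for all i ∈ [n]. Then r_{n,p} = ( (1 + (n−1)^{−1/(p−1)})^{−p} + (n−1)(1 + (n−1)^{1/(p−1)})^{−p} )^{1/p}, and this radius is attained at the center x whose coordinates all equal (1 + (n−1)^{1/(p−1)})^{−1}. -/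
/-! For a centre `x`, the column sums of the matrix `(|δᵢⱼ - xⱼ| ^ p)ᵢⱼ` are
`|1 - xⱼ| ^ p + (n - 1) |xⱼ| ^ p`. This convex function of `xⱼ` is minimised at the point `v`
where its derivative vanishes, i.e. where `u = 1 - v` satisfies `u ^ (p - 1) = (n - 1) v ^ (p - 1)`,
so every column sum is at least `m = u ^ p + (n - 1) v ^ p`. Hence so is some row sum, i.e.
`maxᵢ ‖eᵢ - x‖_p ^ p ≥ m`, with equality for the constant centre `v`. -/

lemma Real.rpow_add_mul_sub_le_rpow {p x x₀ : ℝ} (hp : 1 ≤ p) (hx : 0 ≤ x) (hx₀ : 0 < x₀) :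
    x₀ ^ p + p * x₀ ^ (p - 1) * (x - x₀) ≤ x ^ p := by
  have hs : -1 ≤ x / x₀ - 1 := by linarith [div_nonneg hx hx₀.le]
  have bernoulli := one_add_mul_self_le_rpow_one_add hs hp
  rw [add_sub_cancel, Real.div_rpow hx hx₀.le, le_div_iff₀ (by positivity)] at bernoulli
  calc x₀ ^ p + p * x₀ ^ (p - 1) * (x - x₀)
      = (1 + p * (x / x₀ - 1)) * x₀ ^ p := by
        rw [Real.rpow_sub_one hx₀.ne']; field_simp
    _ ≤ x ^ p := bernoulli

lemma inv_one_add_rpow_neg {a : ℝ} (ha : 0 < a) (s : ℝ) :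
    (1 + a ^ (-s))⁻¹ = a ^ s * (1 + a ^ s)⁻¹ := by
  have : 0 < a ^ s := Real.rpow_pos_of_pos ha s
  rw [Real.rpow_neg ha.le]
  field_simp
  ring

lemma rpow_add_mul_rpow_le_of_stationary {p a u v : ℝ} (hp : 1 ≤ p) (ha : 0 ≤ a) (hu : 0 < u)
    (hv : 0 < v) (huv : u + v = 1) (hstat : u ^ (p - 1) = a * v ^ (p - 1)) (t : ℝ) :
    u ^ p + a * v ^ p ≤ |1 - t| ^ p + a * |t| ^ p := by
  have h₁ := Real.rpow_add_mul_sub_le_rpow hp (abs_nonneg (1 - t)) hu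
  have h₂ := mul_le_mul_of_nonneg_left (Real.rpow_add_mul_sub_le_rpow hp (abs_nonneg t) hv) ha
  have htri : 1 ≤ |1 - t| + |t| := by simpa using abs_add_le (1 - t) t
  have hslack : 0 ≤ p * u ^ (p - 1) * (|1 - t| + |t| - (u + v)) :=
    mul_nonneg (mul_nonneg (by linarith) (Real.rpow_nonneg hu.le _)) (by linarith)
  -- the slopes of the two tangent lines agree by `hstat`, so the first-order terms sum to `hslack`
  rw [hstat] at h₁ hslack
  linarith

lemma le_of_le_sum_col_of_sum_row_le {ι : Type*} [Fintype ι] [Nonempty ι] (M : ι → ι → ℝ)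
    {m R : ℝ} (hcol : ∀ j, m ≤ ∑ i, M i j) (hrow : ∀ i, ∑ j, M i j ≤ R) : m ≤ R := by
  have hcard : (0 : ℝ) < Fintype.card ι := by exact_mod_cast Fintype.card_pos
  refine le_of_mul_le_mul_left ?_ hcard
  calc Fintype.card ι * m = ∑ _j : ι, m := by simp
    _ ≤ ∑ j, ∑ i, M i j := Finset.sum_le_sum fun j _ => hcol j
    _ = ∑ i, ∑ j, M i j := Finset.sum_comm
    _ ≤ ∑ _i : ι, R := Finset.sum_le_sum fun i _ => hrow i
    _ = Fintype.card ι * R := by simp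

section

variable {ι : Type*} [Fintype ι] [DecidableEq ι] {p : ℝ}

lemma sum_abs_single_sub_rpow (i : ι) (y : ℝ) :
    ∑ j, |(Pi.single i 1 : ι → ℝ) j - y| ^ p
      = |1 - y| ^ p + ((Fintype.card ι : ℝ) - 1) * |y| ^ p := by
  rw [Fintype.sum_eq_add_sum_compl i, Pi.single_eq_same]
  have hoff : ∀ j ∈ ({i}ᶜ : Finset ι), |(Pi.single i 1 : ι → ℝ) j - y| ^ p = |y| ^ p := by
    intro j hj
    rw [Pi.single_eq_of_ne (by simpa using hj), zero_sub, abs_neg]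
  rw [Finset.sum_congr rfl hoff, Finset.sum_const, Finset.card_compl, Finset.card_singleton,
    nsmul_eq_mul, Nat.cast_sub (Fintype.card_pos_iff.2 ⟨i⟩), Nat.cast_one]

lemma sum_abs_single_sub_rpow_of_add_eq_one {u v : ℝ} (hu : 0 < u) (hv : 0 ≤ v) (huv : u + v = 1)
    (i : ι) : ∑ j, |(Pi.single i 1 : ι → ℝ) j - v| ^ p
      = u ^ p + ((Fintype.card ι : ℝ) - 1) * v ^ p := by
  rw [sum_abs_single_sub_rpow, ← eq_sub_of_add_eq huv, abs_of_pos hu, abs_of_nonneg hv]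

lemma isLeast_lp_circumradius_single [Nonempty ι] {u v : ℝ} (hp : 1 ≤ p) (hu : 0 < u)
    (hv : 0 < v) (huv : u + v = 1) (hstat : u ^ (p - 1) = ((Fintype.card ι : ℝ) - 1) * v ^ (p - 1)) :
    IsLeast {r : ℝ | 0 ≤ r ∧ ∃ x : ι → ℝ, ∀ i : ι,
        (∑ j, |(Pi.single i 1 : ι → ℝ) j - x j| ^ p) ^ (1 / p) ≤ r}
      ((u ^ p + ((Fintype.card ι : ℝ) - 1) * v ^ p) ^ (1 / p)) := by
  have hp₀ : 0 < p := by linarith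
  have ha : 0 ≤ (Fintype.card ι : ℝ) - 1 := by
    simpa using (Nat.one_le_cast (α := ℝ)).2 Fintype.card_pos
  have hm : 0 ≤ u ^ p + ((Fintype.card ι : ℝ) - 1) * v ^ p := by positivity
  refine ⟨⟨by positivity, fun _ => v, fun i => ?_⟩, ?_⟩
  · rw [sum_abs_single_sub_rpow_of_add_eq_one hu hv.le huv]
  rintro r ⟨hr, x, hx⟩
  rw [one_div, Real.rpow_inv_le_iff_of_pos hm hr hp₀]
  refine le_of_le_sum_col_of_sum_row_le (fun i j => |(Pi.single i 1 : ι → ℝ) j - x j| ^ p)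
    (fun j => ?_) (fun i => ?_)
  · simp_rw [Pi.single_comm _ (1 : ℝ) j, sum_abs_single_sub_rpow]
    exact rpow_add_mul_rpow_le_of_stationary hp ha hu hv huv hstat (x j)
  · have hnonneg : 0 ≤ ∑ j, |(Pi.single i 1 : ι → ℝ) j - x j| ^ p := by positivity
    rw [← Real.rpow_inv_le_iff_of_pos hnonneg hr hp₀, ← one_div]
    exact hx i

end

/-- **Lemma 24 (inscribed ball of the regular simplex in `ℓ^p`).**  Consider `ℝ^n` with
the `p`-norm, `p > 1`, and let `e₁, …, e_n` be the standard basis vectors.  Let `r_{n,p}`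
be the minimal `r ≥ 0` such that some `x ∈ ℝ^n` satisfies `‖eᵢ − x‖_p ≤ r` for all `i`.
Then `r_{n,p} = ((1 + (n−1)^{−1/(p−1)})^{−p} + (n−1)(1 + (n−1)^{1/(p−1)})^{−p})^{1/p}`,
attained at the center `x` all of whose coordinates equal `(1 + (n−1)^{1/(p−1)})⁻¹`. -/
theorem stmt18 (n : ℕ) (hn : 2 ≤ n) (p : ℝ) (hp : 1 < p) :
    sInf {r : ℝ | 0 ≤ r ∧ ∃ x : Fin n → ℝ, ∀ i : Fin n,
        (∑ j, |(Pi.single i 1 : Fin n → ℝ) j - x j| ^ p) ^ (1 / p) ≤ r} =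
      ((1 + ((n : ℝ) - 1) ^ (-(1 : ℝ) / (p - 1))) ^ (-p) +
        ((n : ℝ) - 1) * (1 + ((n : ℝ) - 1) ^ ((1 : ℝ) / (p - 1))) ^ (-p)) ^ (1 / p) ∧
    ∀ i : Fin n,
      (∑ j, |(Pi.single i 1 : Fin n → ℝ) j -
          (1 + ((n : ℝ) - 1) ^ ((1 : ℝ) / (p - 1)))⁻¹| ^ p) ^ (1 / p) =
        ((1 + ((n : ℝ) - 1) ^ (-(1 : ℝ) / (p - 1))) ^ (-p) +
          ((n : ℝ) - 1) * (1 + ((n : ℝ) - 1) ^ ((1 : ℝ) / (p - 1))) ^ (-p)) ^ (1 / p) := by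
  have ha : (0 : ℝ) < n - 1 := by
    have : (2 : ℝ) ≤ n := by exact_mod_cast hn
    linarith
  have : Nonempty (Fin n) := ⟨⟨0, by omega⟩⟩
  set a : ℝ := n - 1
  set s : ℝ := 1 / (p - 1)
  set v := (1 + a ^ s)⁻¹
  set u := (1 + a ^ (-s))⁻¹
  have hv : 0 < v := by positivity
  have hu_eq : u = a ^ s * v := inv_one_add_rpow_neg ha s
  have hu : 0 < u := by rw [hu_eq]; positivity
  have huv : u + v = 1 := by
    rw [hu_eq, ← add_one_mul, add_comm, mul_inv_cancel₀ (by positivity)]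
  have hstat : u ^ (p - 1) = a * v ^ (p - 1) := by
    rw [hu_eq, Real.mul_rpow (by positivity) hv.le, ← Real.rpow_mul ha.le,
      one_div_mul_cancel (by linarith), Real.rpow_one]
  have hpow {w : ℝ} (hw : 0 < w) : (1 + w) ^ (-p) = (1 + w)⁻¹ ^ p := by
    rw [Real.rpow_neg (by positivity), Real.inv_rpow (by positivity)]
  have hcard : (Fintype.card (Fin n) : ℝ) - 1 = a := by simp [a]
  rw [neg_div, hpow (by positivity : 0 < a ^ (-s)), hpow (by positivity : 0 < a ^ s)]
  refine ⟨?_, fun i => ?_⟩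
  · exact (hcard ▸ isLeast_lp_circumradius_single hp.le hu hv huv (hcard ▸ hstat)).csInf_eq
  · rw [sum_abs_single_sub_rpow_of_add_eq_one hu hv.le huv, hcard]
end
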